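/- arXiv:1705.07095 — 2 statements merged into one kernel-verified Lean document; each statement's English description precedes it below -/
import Mathlib

section
/- Let Θ be a finite possibilistic logic theory over a finite set of atoms such that for every interpretation ω, the set {(α,λ) ∈ Θ | ω ⊭ α} is nonempty (e.g. because (⊥, λ₁) ∈ Θ). If the formulas of Θ can be enumerated as (α₁,λ₁),…,(αₙ,λₙ) with λ₁ ≤ ⋯ ≤ λₙ, and M_i denotes the set of interpretations satisfying α_i ∧ ⋯ ∧ αₙ (with M_{n+1} the set of all interpretations), then Σ_ω π_Θ(ω) = Σ_{i=1}^{n} (1 − λ_i) · (|M_{i+1}| − |M_i|). In particular, π_Θ is a probability distribution on interpretations if and only if Σ_{i=1}^{n} (1 − λ_i)·(|M_{i+1}| − |M_i|) = 1. -/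
/-!
Since `λ` is sorted, `π(ω) = 1 − λ_i` where `i` is the last formula violated by `ω`, and the
interpretations whose last violated formula is `α_i` are exactly those of `M_{i+1} \ M_i`.
Grouping the sum over `ω` by this index gives the formula, because `M_i ⊆ M_{i+1}`.
-/

/-- Possibility distribution induced by the weighted formulas `(α i, λ i)`:
`π(ω) = min({1 − λ i | ω ⊭ α i} ∪ {1})`. -/
noncomputable def possDistIdx {A : Type} {n : ℕ}
    (α : Fin n → (A → Bool) → Bool) (lam : Fin n → ℝ) (ω : A → Bool) : ℝ :=
  (insert (1 : ℝ)
      ((Finset.univ.filter (fun i => ¬ α i ω = true)).image (fun i => 1 - lam i))).min'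
    (Finset.insert_nonempty _ _)

/-- `M i`: the interpretations satisfying `α i ∧ ⋯ ∧ α n` (all interpretations for
`i = n+1`). -/
def cutModels {A : Type} [Fintype A] [DecidableEq A] {n : ℕ}
    (α : Fin n → (A → Bool) → Bool) (i : Fin (n + 1)) : Finset (A → Bool) :=
  Finset.univ.filter (fun ω => ∀ j : Fin n, i.val ≤ j.val → α j ω = true)

open Finset

section
variable {A : Type} {n : ℕ} (α : Fin n → (A → Bool) → Bool)

theorem possDistIdx_eq_of_isGreatest {lam : Fin n → ℝ} (hlam : ∀ i, 0 ≤ lam i)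
    (hsorted : Monotone lam) {ω : A → Bool} {i : Fin n}
    (hi : IsGreatest {j | ¬ α j ω = true} i) :
    possDistIdx α lam ω = 1 - lam i := by
  apply le_antisymm
  · exact min'_le _ _ <| mem_insert_of_mem <| mem_image.mpr ⟨i, by simpa using hi.1, rfl⟩
  · refine le_min' _ _ _ fun y hy => ?_
    rcases mem_insert.mp hy with rfl | hy
    · linarith [hlam i]
    · obtain ⟨j, hj, rfl⟩ := mem_image.mp hy
      have : lam j ≤ lam i := hsorted <| hi.2 (by simpa using hj)
      linarith

variable [Fintype A] [DecidableEq A]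

theorem mem_cutModels {ω : A → Bool} {i : Fin (n + 1)} :
    ω ∈ cutModels α i ↔ ∀ j : Fin n, i.val ≤ j.val → α j ω = true := by
  simp [cutModels]

theorem cutModels_castSucc_subset_succ (i : Fin n) :
    cutModels α i.castSucc ⊆ cutModels α i.succ := fun ω hω =>
  (mem_cutModels α).mpr fun j hj =>
    (mem_cutModels α).mp hω j (by simp only [Fin.val_succ, Fin.val_castSucc] at hj ⊢; omega)

theorem mem_cutModels_succ_sdiff_castSucc {ω : A → Bool} {i : Fin n} :
    ω ∈ cutModels α i.succ \ cutModels α i.castSucc ↔ IsGreatest {j | ¬ α j ω = true} i := by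
  simp only [mem_sdiff, mem_cutModels, Fin.val_succ, Fin.val_castSucc, not_forall,
    exists_prop, IsGreatest, upperBounds, Set.mem_ofPred_eq]
  constructor
  · rintro ⟨hafter, j, hij, hj⟩
    have hle : ∀ k : Fin n, ¬ α k ω = true → k ≤ i := fun k hk => by
      by_contra hlt
      exact hk (hafter k (by omega))
    obtain rfl : j = i := le_antisymm (hle j hj) hij
    exact ⟨hj, hle⟩
  · rintro ⟨hi, hle⟩
    refine ⟨fun j hj => ?_, i, le_rfl, hi⟩
    by_contra hj'
    exact absurd (hle hj') (by omega)

theorem card_cutModels_succ_sdiff_castSucc (i : Fin n) :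
    ((cutModels α i.succ \ cutModels α i.castSucc).card : ℝ)
      = (cutModels α i.succ).card - (cutModels α i.castSucc).card := by
  rw [card_sdiff_of_subset (cutModels_castSucc_subset_succ α i),
    Nat.cast_sub (card_le_card (cutModels_castSucc_subset_succ α i))]

theorem possDistIdx_eq_sum_ite_mem_sdiff {lam : Fin n → ℝ} (hlam : ∀ i, 0 ≤ lam i)
    (hsorted : Monotone lam) {ω : A → Bool} (hω : ∃ i, ¬ α i ω = true) :
    possDistIdx α lam ω
      = ∑ i, if ω ∈ cutModels α i.succ \ cutModels α i.castSucc then 1 - lam i else 0 := by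
  obtain ⟨i₀, hi₀⟩ : ∃ i₀, IsGreatest {j | ¬ α j ω = true} i₀ := by
    have : Nonempty (Fin n) := hω.nonempty
    exact (Set.toFinite _).bddAbove.exists_isGreatest_of_nonempty hω
  have hlast : ∀ i, IsGreatest {j | ¬ α j ω = true} i ↔ i = i₀ :=
    fun i => ⟨(·.unique hi₀), by rintro rfl; exact hi₀⟩
  simp only [mem_cutModels_succ_sdiff_castSucc, hlast, sum_ite_eq', mem_univ, if_true]
  exact possDistIdx_eq_of_isGreatest α hlam hsorted hi₀

end

/-- If every interpretation violates some formula and `λ₁ ≤ ⋯ ≤ λₙ`, then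
`Σ_ω π(ω) = Σ_{i=1}^{n} (1 − λ_i)·(|M_{i+1}| − |M_i|)`; in particular `π` is a
probability distribution iff the right-hand side equals `1`. -/
theorem sum_possDist_eq {A : Type} [Fintype A] [DecidableEq A] {n : ℕ}
    (α : Fin n → (A → Bool) → Bool) (lam : Fin n → ℝ)
    (hlam : ∀ i, lam i ∈ Set.Icc (0 : ℝ) 1)
    (hsorted : Monotone lam)
    (hviol : ∀ ω : A → Bool, ∃ i, ¬ α i ω = true) :
    (∑ ω : A → Bool, possDistIdx α lam ω)
        = ∑ i : Fin n, (1 - lam i) *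
            (((cutModels α i.succ).card : ℝ) - ((cutModels α i.castSucc).card : ℝ))
      ∧ ((∑ ω : A → Bool, possDistIdx α lam ω) = 1 ↔
          ∑ i : Fin n, (1 - lam i) *
            (((cutModels α i.succ).card : ℝ) - ((cutModels α i.castSucc).card : ℝ)) = 1) := by
  have hsum : (∑ ω : A → Bool, possDistIdx α lam ω)
      = ∑ i : Fin n, (1 - lam i) *
          (((cutModels α i.succ).card : ℝ) - ((cutModels α i.castSucc).card : ℝ)) := by
    simp_rw [possDistIdx_eq_sum_ite_mem_sdiff α (fun i => (hlam i).1) hsorted (hviol _)]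
    rw [sum_comm]
    refine sum_congr rfl fun i _ => ?_
    rw [← sum_filter, sum_const, filter_mem_eq_inter, univ_inter, nsmul_eq_mul,
      card_cutModels_succ_sdiff_castSucc, mul_comm]
  exact ⟨hsum, by rw [hsum]⟩
end

section
/- Let Θ = {(α₁,λ₁),…,(αₙ,λₙ)} with λ₁ ≤ ⋯ ≤ λₙ, α₁ = ⊥, over a finite set of atoms, and let 𝓔 be a finite multiset of interpretations. For 1 ≤ i ≤ n let 𝓔_i = {ω ∈ 𝓔 | ω ⊨ α_i ∧ ⋯ ∧ αₙ} and 𝓔_{n+1} = 𝓔. Then ∏_{ω ∈ 𝓔} π_Θ(ω) = ∏_{i=1}^{n} (1 − λ_i)^{|𝓔_{i+1}| − |𝓔_i|}. -/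
/-- `𝓔_i`: the sub-multiset of examples satisfying `α i ∧ ⋯ ∧ α n`
(all of `𝓔` for `i = n+1`). -/
def exCut {A : Type} {n : ℕ} (α : Fin n → (A → Bool) → Bool)
    (𝓔 : Multiset (A → Bool)) (i : Fin (n + 1)) : Multiset (A → Bool) :=
  𝓔.filter (fun ω => ∀ j : Fin n, i.val ≤ j.val → α j ω = true)

/-!
Since `α₁ = ⊥`, every interpretation `ω` violates some formula; let `m` be the last one. By
monotonicity of `λ`, `π(ω) = 1 - λ_m`, and `ω ∈ 𝓔_{i+1} \ 𝓔_i` exactly when `m = i`. Hence both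
sides equal `∏_i (1 - λ_i) ^ #{ω ∈ 𝓔 | m = i}`.
-/

theorem Multiset.prod_map_eq_prod_pow_card_filter {β ι M : Type*} [Fintype ι] [CommMonoid M]
    (R : β → ι → Prop) [∀ x i, Decidable (R x i)] (g : β → M) (h : ι → M) (s : Multiset β)
    (hR : ∀ x ∈ s, ∃! i, R x i) (hg : ∀ x i, R x i → g x = h i) :
    (s.map g).prod = ∏ i, h i ^ (s.filter (R · i)).card := by
  induction s using Multiset.induction with
  | empty => simp
  | cons x s ih =>
    obtain ⟨i₀, hi₀, huniq⟩ := hR x (Multiset.mem_cons_self x s)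
    have hx : ∏ i, h i ^ (if R x i then 1 else 0) = g x := by
      rw [Finset.prod_eq_single i₀ (fun i _ hi => by simp [mt (huniq i) hi]) (by simp), hg x i₀ hi₀]
      simp [hi₀]
    simp only [Multiset.map_cons, Multiset.prod_cons, Multiset.filter_cons, Multiset.card_add,
      pow_add, Finset.prod_mul_distrib, ih (fun y hy => hR y (Multiset.mem_cons_of_mem hy)),
      apply_ite Multiset.card, Multiset.card_singleton, Multiset.card_zero, hx]

variable {A : Type} {n : ℕ}

def IsLastViolated (α : Fin n → (A → Bool) → Bool) (ω : A → Bool) (i : Fin n) : Prop :=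
  α i ω = false ∧ ∀ j, i < j → α j ω = true

instance (α : Fin n → (A → Bool) → Bool) (ω : A → Bool) (i : Fin n) :
    Decidable (IsLastViolated α ω i) :=
  inferInstanceAs (Decidable (_ ∧ _))

theorem existsUnique_isLastViolated {α : Fin n → (A → Bool) → Bool} {ω : A → Bool} {i : Fin n}
    (hi : α i ω = false) : ∃! m, IsLastViolated α ω m := by
  set S := Finset.univ.filter (fun j => α j ω = false)
  have hS : S.Nonempty := ⟨i, by simp [S, hi]⟩
  have hmax : α (S.max' hS) ω = false := by simpa [S] using S.max'_mem hS
  refine ⟨S.max' hS, ⟨hmax, fun j hj => ?_⟩, fun m ⟨hm, hafter⟩ => ?_⟩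
  · by_contra hj_false
    exact (S.le_max' j (by simpa [S] using hj_false)).not_gt hj
  · refine le_antisymm (S.le_max' m (by simp [S, hm])) (not_lt.mp fun hlt => ?_)
    simp [hafter _ hlt] at hmax

theorem possDistIdx_eq_of_isLastViolated {α : Fin n → (A → Bool) → Bool} {lam : Fin n → ℝ}
    {ω : A → Bool} {m : Fin n} (hmono : Monotone lam) (hm : 0 ≤ lam m)
    (h : IsLastViolated α ω m) : possDistIdx α lam ω = 1 - lam m := by
  refine le_antisymm (Finset.min'_le _ _ ?_) (Finset.le_min' _ _ _ ?_)
  · exact Finset.mem_insert_of_mem (Finset.mem_image.mpr ⟨m, by simp [h.1], rfl⟩)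
  · intro y hy
    rcases Finset.mem_insert.mp hy with rfl | hy
    · linarith
    · obtain ⟨i, hi, rfl⟩ := Finset.mem_image.mp hy
      have hi : α i ω = false := by simpa using hi
      have him : i ≤ m := not_lt.mp fun hlt => by simp [h.2 i hlt] at hi
      linarith [hmono him]

theorem card_exCut_succ (α : Fin n → (A → Bool) → Bool) (𝓔 : Multiset (A → Bool)) (i : Fin n) :
    (exCut α 𝓔 i.succ).card
      = (exCut α 𝓔 i.castSucc).card + (𝓔.filter (IsLastViolated α · i)).card := by
  have hsat : exCut α 𝓔 i.castSucc = (exCut α 𝓔 i.succ).filter (α i · = true) := by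
    rw [exCut, exCut, Multiset.filter_filter]
    refine Multiset.filter_congr fun ω _ => ⟨fun h => ⟨h i le_rfl, fun j hj => h j ?_⟩, ?_⟩
    · simp only [Fin.val_castSucc, Fin.val_succ] at hj ⊢; omega
    · rintro ⟨hi, h⟩ j hj
      rcases (Fin.val_castSucc i ▸ hj).eq_or_lt with hij | hij
      · rwa [← Fin.ext hij]
      · exact h j (by simpa using hij)
  have hviol : 𝓔.filter (IsLastViolated α · i)
      = (exCut α 𝓔 i.succ).filter (fun ω => ¬ α i ω = true) := by
    rw [exCut, Multiset.filter_filter]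
    refine Multiset.filter_congr fun ω _ => ?_
    simp only [IsLastViolated, Fin.lt_def, Fin.val_succ, Nat.succ_le_iff, Bool.not_eq_true]
  rw [hsat, hviol, ← Multiset.card_add, Multiset.filter_add_not]

theorem likelihood_factorization_general {A : Type} {n : ℕ} (hn : 0 < n)
    (α : Fin n → (A → Bool) → Bool) (lam : Fin n → ℝ)
    (hlam : ∀ i, lam i ∈ Set.Icc (0 : ℝ) 1)
    (hsorted : Monotone lam)
    (hbot : α ⟨0, hn⟩ = fun _ => false)
    (𝓔 : Multiset (A → Bool)) :
    (𝓔.map (possDistIdx α lam)).prod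
      = ∏ i : Fin n,
          (1 - lam i) ^ ((exCut α 𝓔 i.succ).card - (exCut α 𝓔 i.castSucc).card) := by
  have hlast : ∀ ω, ∃! m, IsLastViolated α ω m :=
    fun ω => existsUnique_isLastViolated (congrFun hbot ω)
  rw [Multiset.prod_map_eq_prod_pow_card_filter (IsLastViolated α) _ (fun i => 1 - lam i) 𝓔
    (fun ω _ => hlast ω) (fun ω m h => possDistIdx_eq_of_isLastViolated hsorted (hlam m).1 h)]
  simp only [card_exCut_succ, Nat.add_sub_cancel_left]

/-- With `λ₁ ≤ ⋯ ≤ λₙ` and `α₁ = ⊥`, the likelihood of a multiset `𝓔` of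
interpretations factorizes: `∏_{ω ∈ 𝓔} π(ω) = ∏_i (1 − λ_i)^{|𝓔_{i+1}| − |𝓔_i|}`. -/
theorem likelihood_factorization {A : Type} [Fintype A] {n : ℕ} (hn : 0 < n)
    (α : Fin n → (A → Bool) → Bool) (lam : Fin n → ℝ)
    (hlam : ∀ i, lam i ∈ Set.Icc (0 : ℝ) 1)
    (hsorted : Monotone lam)
    (hbot : α ⟨0, hn⟩ = fun _ => false)
    (𝓔 : Multiset (A → Bool)) :
    (𝓔.map (possDistIdx α lam)).prod
      = ∏ i : Fin n,
          (1 - lam i) ^ ((exCut α 𝓔 i.succ).card - (exCut α 𝓔 i.castSucc).card) :=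
  likelihood_factorization_general hn α lam hlam hsorted hbot 𝓔
end
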